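/- Let n ≥ 2, let H_1, ..., H_k be finite simple graphs with H_1 a single edge, and let β = (β_1, ..., β_k) ∈ ℝ^k with β_2, ..., β_k ≥ 0 (β_1 arbitrary). Then the exponential random graph measure μ_{n;β} satisfies the FKG lattice condition: for all configurations x, y ∈ A_n, μ_{n;β}(x ∨ y) · μ_{n;β}(x ∧ y) ≥ μ_{n;β}(x) · μ_{n;β}(y), where x ∨ y and x ∧ y are the componentwise maximum and minimum configurations (corresponding to the graphs with union and intersection edge sets). -/

import Mathlib

open Finset

/-- Edges of the complete graph on `n` labeled vertices. -/
def Edge (n : ℕ) : Type := {e : Sym2 (Fin n) // ¬ e.IsDiag}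

instance (n : ℕ) : Fintype (Edge n) := by unfold Edge; infer_instance
instance (n : ℕ) : DecidableEq (Edge n) := by unfold Edge; infer_instance

/-- The simple graph on `Fin n` associated with a configuration `x ∈ {0,1}^{E_n}`. -/
def graphOf {n : ℕ} (x : Edge n → Fin 2) : SimpleGraph (Fin n) where
  Adj a b := ∃ hab : a ≠ b, x ⟨s(a, b), fun hd => hab (Sym2.mk_isDiag_iff.mp hd)⟩ = 1
  symm := by
    constructor
    rintro a b ⟨hab, hx⟩
    refine ⟨hab.symm, ?_⟩
    have he : (⟨s(b, a), fun hd => hab.symm (Sym2.mk_isDiag_iff.mp hd)⟩ : Edge n)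
        = ⟨s(a, b), fun hd => hab (Sym2.mk_isDiag_iff.mp hd)⟩ :=
      Subtype.ext Sym2.eq_swap
    rw [he]; exact hx
  loopless := by constructor; rintro a ⟨hab, _⟩; exact hab rfl

/-- The number `hom(H, G)` of edge-preserving vertex maps from `H` to `G`. -/
noncomputable def homCount {V W : Type*} (H : SimpleGraph W) (G : SimpleGraph V) : ℕ :=
  Nat.card {f : W → V // ∀ a b, H.Adj a b → G.Adj (f a) (f b)}

/-- The homomorphism density `t(H, G) = hom(H, G) / n^{|V(H)|}` for a graph `G`
on `n` vertices and `H` on `m` vertices. -/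
noncomputable def homDensity {m n : ℕ} (H : SimpleGraph (Fin m)) (G : SimpleGraph (Fin n)) : ℝ :=
  (homCount H G : ℝ) / (n : ℝ) ^ m

/-- The Hamiltonian of a general exponential random graph:
`H_{n;β}(G) = n² Σ_j β_j t(H_j, G)`. -/
noncomputable def HamERG (n k : ℕ) (m : Fin k → ℕ)
    (Hs : (j : Fin k) → SimpleGraph (Fin (m j))) (β : Fin k → ℝ)
    (x : Edge n → Fin 2) : ℝ :=
  (n : ℝ) ^ 2 * ∑ j : Fin k, β j * homDensity (Hs j) (graphOf x)

/-- Partition function of the exponential random graph. -/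
noncomputable def ZERG (n k : ℕ) (m : Fin k → ℕ)
    (Hs : (j : Fin k) → SimpleGraph (Fin (m j))) (β : Fin k → ℝ) : ℝ :=
  ∑ x : Edge n → Fin 2, Real.exp (HamERG n k m Hs β x)

/-- Gibbs measure of the exponential random graph. -/
noncomputable def gibbsERG (n k : ℕ) (m : Fin k → ℕ)
    (Hs : (j : Fin k) → SimpleGraph (Fin (m j))) (β : Fin k → ℝ)
    (x : Edge n → Fin 2) : ℝ :=
  Real.exp (HamERG n k m Hs β x) / ZERG n k m Hs β

/-- Expectation under the exponential random graph measure. -/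
noncomputable def expectERG (n k : ℕ) (m : Fin k → ℕ)
    (Hs : (j : Fin k) → SimpleGraph (Fin (m j))) (β : Fin k → ℝ)
    (f : (Edge n → Fin 2) → ℝ) : ℝ :=
  ∑ x : Edge n → Fin 2, f x * gibbsERG n k m Hs β x


/-! The edge count `hom(K₂, ·)` is modular and every `hom(H, ·)` is supermodular with respect to
union and intersection of graphs, because homomorphisms into `G₁ ⊓ G₂` are exactly the common
homomorphisms into `G₁` and `G₂`, while homomorphisms into `G₁ ⊔ G₂` include those into either
(and, when `H` has at most one edge, are all of this kind). Hence with `β_j ≥ 0` for `j ≥ 2` the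
Hamiltonian is supermodular, and the lattice condition follows after exponentiating, the
partition functions on both sides being the same. -/

lemma Fin.two_max_eq_one_iff (a b : Fin 2) : max a b = 1 ↔ a = 1 ∨ b = 1 := by
  revert a b; decide

lemma Fin.two_min_eq_one_iff (a b : Fin 2) : min a b = 1 ↔ a = 1 ∧ b = 1 := by
  revert a b; decide

lemma graphOf_max {n : ℕ} (x y : Edge n → Fin 2) :
    graphOf (fun i => max (x i) (y i)) = graphOf x ⊔ graphOf y := by
  ext a b
  simp only [graphOf, SimpleGraph.sup_adj, Fin.two_max_eq_one_iff, exists_or]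

lemma graphOf_min {n : ℕ} (x y : Edge n → Fin 2) :
    graphOf (fun i => min (x i) (y i)) = graphOf x ⊓ graphOf y := by
  ext a b
  simp only [graphOf, SimpleGraph.inf_adj, Fin.two_min_eq_one_iff]
  exact ⟨fun ⟨h, hx, hy⟩ => ⟨⟨h, hx⟩, h, hy⟩, fun ⟨⟨h, hx⟩, _, hy⟩ => ⟨h, hx, hy⟩⟩

namespace SimpleGraph

variable {V W : Type*}

lemma eq_or_eq_of_card_le_two [Fintype W] (hW : Fintype.card W ≤ 2) {a b : W} (hab : a ≠ b)
    (c : W) : c = a ∨ c = b := by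
  classical
  by_contra! hc
  have hcard : ({a, b, c} : Finset W).card = 3 :=
    Finset.card_eq_three.mpr ⟨a, b, c, hab, hc.1.symm, hc.2.symm, rfl⟩
  have := Finset.card_le_univ ({a, b, c} : Finset W)
  omega

lemma edgeSet_subsingleton_of_card_le_two [Fintype W] (hW : Fintype.card W ≤ 2)
    (H : SimpleGraph W) : H.edgeSet.Subsingleton := by
  intro e he e' he'
  induction e using Sym2.ind with | _ a b => ?_
  induction e' using Sym2.ind with | _ c d => ?_
  have hab : a ≠ b := H.ne_of_adj he
  have hcd : c ≠ d := H.ne_of_adj he'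
  rcases eq_or_eq_of_card_le_two hW hab c with rfl | rfl <;>
    rcases eq_or_eq_of_card_le_two hW hab d with rfl | rfl
  all_goals simp_all [Sym2.eq_swap]

def homSet (H : SimpleGraph W) (G : SimpleGraph V) : Set (W → V) :=
  {f | ∀ a b, H.Adj a b → G.Adj (f a) (f b)}

lemma homCount_eq_ncard_homSet (H : SimpleGraph W) (G : SimpleGraph V) :
    homCount H G = (homSet H G).ncard :=
  Nat.card_coe_set_eq _

lemma homSet_inf (H : SimpleGraph W) (G₁ G₂ : SimpleGraph V) :
    homSet H (G₁ ⊓ G₂) = homSet H G₁ ∩ homSet H G₂ := by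
  ext f
  exact ⟨fun hf => ⟨fun a b h => (hf a b h).1, fun a b h => (hf a b h).2⟩,
    fun hf a b h => ⟨hf.1 a b h, hf.2 a b h⟩⟩

lemma homSet_union_subset_sup (H : SimpleGraph W) (G₁ G₂ : SimpleGraph V) :
    homSet H G₁ ∪ homSet H G₂ ⊆ homSet H (G₁ ⊔ G₂) := by
  rintro f (hf | hf) a b h
  exacts [Or.inl (hf a b h), Or.inr (hf a b h)]

lemma homSet_sup_of_edgeSet_subsingleton {H : SimpleGraph W} (hH : H.edgeSet.Subsingleton)
    (G₁ G₂ : SimpleGraph V) : homSet H (G₁ ⊔ G₂) = homSet H G₁ ∪ homSet H G₂ := by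
  refine Set.Subset.antisymm ?_ (homSet_union_subset_sup H G₁ G₂)
  intro f hf
  by_cases hedge : ∃ a b, H.Adj a b
  · obtain ⟨a, b, hab⟩ := hedge
    -- every edge of `H` is `s(a, b)`, so `f` is a homomorphism into whichever `Gᵢ` holds `f a f b`
    have hmaps : ∀ G : SimpleGraph V, G.Adj (f a) (f b) → f ∈ homSet H G := by
      intro G hG c d hcd
      rcases Sym2.eq_iff.mp (hH hcd hab) with ⟨rfl, rfl⟩ | ⟨rfl, rfl⟩
      exacts [hG, hG.symm]
    exact (hf a b hab).imp (hmaps G₁) (hmaps G₂)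
  · exact Or.inl fun a b hab => absurd ⟨a, b, hab⟩ hedge

variable [Finite V] [Finite W]

lemma homCount_add_homCount_le_sup_add_inf (H : SimpleGraph W) (G₁ G₂ : SimpleGraph V) :
    homCount H G₁ + homCount H G₂ ≤ homCount H (G₁ ⊔ G₂) + homCount H (G₁ ⊓ G₂) := by
  simp only [homCount_eq_ncard_homSet, homSet_inf]
  rw [← Set.ncard_union_add_ncard_inter]
  gcongr
  exacts [Set.toFinite _, homSet_union_subset_sup H G₁ G₂]

lemma homCount_sup_add_inf_of_edgeSet_subsingleton {H : SimpleGraph W}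
    (hH : H.edgeSet.Subsingleton) (G₁ G₂ : SimpleGraph V) :
    homCount H (G₁ ⊔ G₂) + homCount H (G₁ ⊓ G₂) = homCount H G₁ + homCount H G₂ := by
  simp only [homCount_eq_ncard_homSet, homSet_inf, homSet_sup_of_edgeSet_subsingleton hH]
  exact Set.ncard_union_add_ncard_inter _ _

end SimpleGraph

lemma homDensity_add_le_sup_add_inf {m n : ℕ} (H : SimpleGraph (Fin m))
    (G₁ G₂ : SimpleGraph (Fin n)) :
    homDensity H G₁ + homDensity H G₂ ≤ homDensity H (G₁ ⊔ G₂) + homDensity H (G₁ ⊓ G₂) := by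
  simp only [homDensity, ← add_div]
  gcongr ?_ / _
  exact_mod_cast SimpleGraph.homCount_add_homCount_le_sup_add_inf H G₁ G₂

lemma homDensity_sup_add_inf_of_le_two {m n : ℕ} (hm : m ≤ 2) (H : SimpleGraph (Fin m))
    (G₁ G₂ : SimpleGraph (Fin n)) :
    homDensity H (G₁ ⊔ G₂) + homDensity H (G₁ ⊓ G₂) = homDensity H G₁ + homDensity H G₂ := by
  have hH := H.edgeSet_subsingleton_of_card_le_two (by rwa [Fintype.card_fin])
  simp only [homDensity, ← add_div, ← Nat.cast_add,
    SimpleGraph.homCount_sup_add_inf_of_edgeSet_subsingleton hH]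

lemma HamERG_add_le_max_add_min {n k : ℕ} (hk : 0 < k) {m : Fin k → ℕ}
    {Hs : (j : Fin k) → SimpleGraph (Fin (m j))} {β : Fin k → ℝ} (hm₀ : m ⟨0, hk⟩ ≤ 2)
    (hβ : ∀ j : Fin k, j ≠ ⟨0, hk⟩ → 0 ≤ β j) (x y : Edge n → Fin 2) :
    HamERG n k m Hs β x + HamERG n k m Hs β y ≤
      HamERG n k m Hs β (fun i => max (x i) (y i))
        + HamERG n k m Hs β (fun i => min (x i) (y i)) := by
  simp only [HamERG, graphOf_max, graphOf_min, ← mul_add, ← Finset.sum_add_distrib]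
  refine mul_le_mul_of_nonneg_left (Finset.sum_le_sum fun j _ => ?_) (by positivity)
  by_cases hj : j = ⟨0, hk⟩
  · subst hj
    rw [homDensity_sup_add_inf_of_le_two hm₀]
  · exact mul_le_mul_of_nonneg_left (homDensity_add_le_sup_add_inf _ _ _) (hβ j hj)

theorem erg_fkg_lattice_condition_general (n k : ℕ) (hk : 0 < k) (m : Fin k → ℕ)
    (Hs : (j : Fin k) → SimpleGraph (Fin (m j))) (β : Fin k → ℝ)
    (hm₀ : m ⟨0, hk⟩ = 2)
    (hβ : ∀ j : Fin k, j ≠ ⟨0, hk⟩ → 0 ≤ β j)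
    (x y : Edge n → Fin 2) :
    gibbsERG n k m Hs β x * gibbsERG n k m Hs β y ≤
      gibbsERG n k m Hs β (fun i => max (x i) (y i))
        * gibbsERG n k m Hs β (fun i => min (x i) (y i)) := by
  have hZ : 0 < ZERG n k m Hs β := Finset.sum_pos (fun _ _ => Real.exp_pos _) univ_nonempty
  simp only [gibbsERG, div_mul_div_comm, ← Real.exp_add]
  gcongr ?_ / _
  exact Real.exp_le_exp.mpr (HamERG_add_le_max_add_min hk hm₀.le hβ x y)

/-- Lemma 4.1: if `H₁` is a single edge, `β₁ ∈ ℝ` is arbitrary and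
`β₂, …, β_k ≥ 0`, the exponential random graph measure satisfies the FKG lattice
condition. -/
theorem erg_fkg_lattice_condition (n k : ℕ) (hn : 2 ≤ n) (hk : 0 < k) (m : Fin k → ℕ)
    (Hs : (j : Fin k) → SimpleGraph (Fin (m j))) (β : Fin k → ℝ)
    (hm₀ : m ⟨0, hk⟩ = 2)
    (hH₁ : ∀ a b, (Hs ⟨0, hk⟩).Adj a b ↔ a ≠ b)
    (hβ : ∀ j : Fin k, j ≠ ⟨0, hk⟩ → 0 ≤ β j)
    (x y : Edge n → Fin 2) :
    gibbsERG n k m Hs β x * gibbsERG n k m Hs β y ≤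
      gibbsERG n k m Hs β (fun i => max (x i) (y i))
        * gibbsERG n k m Hs β (fun i => min (x i) (y i)) :=
  erg_fkg_lattice_condition_general n k hk m Hs β hm₀ hβ x y
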